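/- arXiv:1504.03963 — 3 statements merged into one kernel-verified Lean document; each statement's English description precedes it below -/
import Mathlib

section
/- If [[A, B], [C, D]] is a real symplectic 2d×2d matrix (i.e. it satisfies SᵀJS = J), then the complex matrix A + iB is invertible. -/
/-!
Transposing a symplectic matrix keeps it symplectic, and for `Sᵀ` the block relations read
`A Bᵀ = B Aᵀ` and `A Dᵀ - B Cᵀ = 1`. The first makes `Z = A + iB` satisfy
`Z Zᴴ = A Aᵀ + B Bᵀ = M Mᴴ` with `M = [A B]`; the second says that `M` has a right inverse,
so `M Mᴴ` has trivial kernel and is invertible, hence so is `Z`.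
-/

open Matrix

namespace Matrix

theorem isUnit_mul_conjTranspose_of_mul_eq_one {m n K : Type*} [Fintype m] [Fintype n]
    [DecidableEq m] [Field K] [PartialOrder K] [StarRing K] [StarOrderedRing K]
    {M : Matrix m n K} {N : Matrix n m K} (h : M * N = 1) : IsUnit (M * Mᴴ) := by
  refine mulVec_injective_iff_isUnit.1 <| (injective_iff_map_eq_zero (M * Mᴴ).mulVecLin).2 ?_
  intro v hv
  have hMv : Mᴴ *ᵥ v = 0 := (self_mul_conjTranspose_mulVec_eq_zero M v).1 hv
  calc v = (M * N)ᴴ *ᵥ v := by rw [h, conjTranspose_one, one_mulVec]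
    _ = 0 := by rw [conjTranspose_mul, ← mulVec_mulVec, hMv, mulVec_zero]

theorem mem_symplecticGroup_iff_transpose_mul_fromBlocks_mul {n K : Type*} [Fintype n]
    [DecidableEq n] [CommRing K] {S : Matrix (n ⊕ n) (n ⊕ n) K} :
    S ∈ symplecticGroup n K ↔ Sᵀ * fromBlocks 0 1 (-1) 0 * S = fromBlocks 0 1 (-1) 0 := by
  have hJ : fromBlocks 0 1 (-1) 0 = -J n K := by simp [J, fromBlocks_neg]
  rw [SymplecticGroup.mem_iff', hJ, Matrix.mul_neg, Matrix.neg_mul, neg_inj]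

theorem conjTranspose_map_ofReal {m n : Type*} (A : Matrix m n ℝ) :
    (A.map Complex.ofReal)ᴴ = Aᵀ.map Complex.ofReal := by
  rw [← conjTranspose_eq_transpose_of_trivial,
    conjTranspose_map _ fun _ => (Complex.conj_ofReal _).symm]

end Matrix

open Complex in
theorem add_I_smul_mul_conjTranspose {m n : Type*} [Fintype n] {P Q : Matrix m n ℂ}
    (hPQ : P * Qᴴ = Q * Pᴴ) :
    (P + I • Q) * (P + I • Q)ᴴ = fromCols P Q * (fromCols P Q)ᴴ := by
  rw [conjTranspose_fromCols_eq_fromRows_conjTranspose, fromCols_mul_fromRows,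
    conjTranspose_add, conjTranspose_smul, star_def, conj_I]
  simp only [Matrix.add_mul, Matrix.mul_add, Matrix.smul_mul, Matrix.mul_smul, hPQ]
  linear_combination (norm := module) -(I_mul_I • (Q * Qᴴ : Matrix m m ℂ))

open Complex ComplexOrder in
theorem isUnit_add_I_smul {n : Type*} [Fintype n] [DecidableEq n] {P Q X Y : Matrix n n ℂ}
    (hPQ : P * Qᴴ = Q * Pᴴ) (hXY : P * X + Q * Y = 1) : IsUnit (P + I • Q) := by
  have hinv : fromCols P Q * fromRows X Y = 1 := by rw [fromCols_mul_fromRows, hXY]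
  have hunit := isUnit_mul_conjTranspose_of_mul_eq_one hinv
  rw [← add_I_smul_mul_conjTranspose hPQ] at hunit
  exact isUnit_of_mul_isUnit_left hunit

/-- If [[A,B],[C,D]] is real symplectic then A + iB is invertible. -/
theorem stmt1 (d : ℕ) (A B C D : Matrix (Fin d) (Fin d) ℝ)
    (hS : (Matrix.fromBlocks A B C D)ᵀ *
        (Matrix.fromBlocks 0 1 (-1) 0 : Matrix (Fin d ⊕ Fin d) (Fin d ⊕ Fin d) ℝ) *
        (Matrix.fromBlocks A B C D) =
      (Matrix.fromBlocks 0 1 (-1) 0 : Matrix (Fin d ⊕ Fin d) (Fin d ⊕ Fin d) ℝ)) :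
    IsUnit (A.map (Complex.ofReal) + Complex.I • B.map (Complex.ofReal)) := by
  have hmem := SymplecticGroup.transpose_mem
    (mem_symplecticGroup_iff_transpose_mul_fromBlocks_mul.2 hS)
  rw [fromBlocks_transpose, SymplecticGroup.fromBlocks_mem_iff] at hmem
  obtain ⟨hAB, -, hAD⟩ := hmem
  simp only [transpose_transpose] at hAB hAD
  set φ : Matrix (Fin d) (Fin d) ℝ →+* Matrix (Fin d) (Fin d) ℂ := Complex.ofRealHom.mapMatrix
  have hAB' : φ A * (φ B)ᴴ = φ B * (φ A)ᴴ := by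
    simp only [show ∀ M, (φ M)ᴴ = φ Mᵀ from conjTranspose_map_ofReal, ← map_mul, hAB]
  have hAD' : φ A * φ Dᵀ + φ B * (-φ Cᵀ) = 1 := by
    rw [mul_neg, ← sub_eq_add_neg, ← map_mul, ← map_mul, ← map_sub, hAD, map_one]
  exact isUnit_add_I_smul hAB' hAD'
end

section
/- Iwasawa-type decomposition: every X = [[A,B],[C,D]] ∈ Sp(2d,ℝ) factors as X = [[L, 0], [PL, L^{-1}]] · R where L = (AAᵀ + BBᵀ)^{1/2}, P = (CAᵀ + DBᵀ)(AAᵀ + BBᵀ)^{-1} is symmetric, and R ∈ Sp(2d,ℝ) ∩ O(2d). -/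
/-!
The symplectic relations on the blocks of `X = [[A, B], [C, D]]` give `A Bᵀ = B Aᵀ` and, with
`M = A Aᵀ + B Bᵀ`, the identities `M C = (A Cᵀ + B Dᵀ) A - B` and `M D = (A Cᵀ + B Dᵀ) B + A`.
The first, with `L² = M`, makes `U + iV = L⁻¹ (A + iB)` unitary; the other two show that
`M (C Aᵀ + D Bᵀ) = (A Cᵀ + B Dᵀ) M`, i.e. that `P` is symmetric, and express the lower blocks
as `C = P A - M⁻¹ B`, `D = P B + M⁻¹ A`, which is exactly the lower block row of
`[[L, 0], [P L, L⁻¹]] · [[U, V], [-V, U]]`. A real matrix of the form `[[U, V], [-V, U]]`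
commutes with `J` (it is the realification of `U + iV`), so if it is orthogonal it is also
symplectic.
-/

open Matrix

namespace Matrix

variable {n R : Type*} [Fintype n] [DecidableEq n] [CommRing R]

theorem fromBlocks_mul_transpose_eq_one {U V : Matrix n n R}
    (hUU : U * Uᵀ + V * Vᵀ = 1) (hUV : U * Vᵀ = V * Uᵀ) :
    fromBlocks U V (-V) U * (fromBlocks U V (-V) U)ᵀ = 1 := by
  rw [fromBlocks_transpose, fromBlocks_multiply, ← fromBlocks_one, fromBlocks_inj]
  exact ⟨hUU, by simp [hUV], by simp [hUV], by simpa [add_comm] using hUU⟩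

theorem commute_J_fromBlocks (U V : Matrix n n R) :
    Commute (J n R) (fromBlocks U V (-V) U) := by
  simp [Commute, SemiconjBy, J, fromBlocks_multiply]

end Matrix

namespace SymplecticGroup

variable {n R : Type*} [Fintype n] [DecidableEq n] [CommRing R]

theorem mem_iff_neg_J {X : Matrix (n ⊕ n) (n ⊕ n) R} :
    X ∈ symplecticGroup n R ↔ Xᵀ * fromBlocks 0 1 (-1) 0 * X = fromBlocks 0 1 (-1) 0 := by
  have hJ : (fromBlocks 0 1 (-1) 0 : Matrix (n ⊕ n) (n ⊕ n) R) = -J n R := by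
    simp [J, fromBlocks_neg]
  rw [mem_iff', hJ, mul_neg, neg_mul, neg_inj]

theorem mem_of_transpose_mul_self_eq_one_of_commute {X : Matrix (n ⊕ n) (n ⊕ n) R}
    (hX : Xᵀ * X = 1) (hJX : Commute (J n R) X) : X ∈ symplecticGroup n R := by
  rw [mem_iff', mul_assoc, hJX.eq, ← mul_assoc, hX, one_mul]

variable {A B C D : Matrix n n R}

theorem mul_transpose_comm_of_fromBlocks_mem (hX : fromBlocks A B C D ∈ symplecticGroup n R) :
    A * Bᵀ = B * Aᵀ := by
  have := fromBlocks_mem_iff.1 (fromBlocks_transpose A B C D ▸ transpose_mem hX)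
  simpa using this.1

theorem gram_mul_lower_left (hX : fromBlocks A B C D ∈ symplecticGroup n R) :
    (A * Aᵀ + B * Bᵀ) * C = (A * Cᵀ + B * Dᵀ) * A - B := by
  obtain ⟨hAC, -, hAD⟩ := fromBlocks_mem_iff.1 hX
  have hDA : Dᵀ * A = Bᵀ * C + 1 := by
    refine eq_add_of_sub_eq' ?_
    simpa using congrArg transpose hAD
  calc (A * Aᵀ + B * Bᵀ) * C = A * (Aᵀ * C) + B * (Bᵀ * C) := by noncomm_ring
    _ = A * (Cᵀ * A) + B * (Dᵀ * A) - B := by rw [hAC, hDA]; noncomm_ring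
    _ = (A * Cᵀ + B * Dᵀ) * A - B := by noncomm_ring

theorem gram_mul_lower_right (hX : fromBlocks A B C D ∈ symplecticGroup n R) :
    (A * Aᵀ + B * Bᵀ) * D = (A * Cᵀ + B * Dᵀ) * B + A := by
  obtain ⟨-, hBD, hAD⟩ := fromBlocks_mem_iff.1 hX
  calc (A * Aᵀ + B * Bᵀ) * D = A * (Aᵀ * D) + B * (Bᵀ * D) := by noncomm_ring
    _ = A * (Cᵀ * B) + B * (Dᵀ * B) + A := by rw [eq_add_of_sub_eq' hAD, hBD]; noncomm_ring
    _ = (A * Cᵀ + B * Dᵀ) * B + A := by noncomm_ring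

theorem gram_mul_comm (hX : fromBlocks A B C D ∈ symplecticGroup n R) :
    (A * Aᵀ + B * Bᵀ) * (C * Aᵀ + D * Bᵀ) = (A * Cᵀ + B * Dᵀ) * (A * Aᵀ + B * Bᵀ) := by
  calc (A * Aᵀ + B * Bᵀ) * (C * Aᵀ + D * Bᵀ)
      = (A * Aᵀ + B * Bᵀ) * C * Aᵀ + (A * Aᵀ + B * Bᵀ) * D * Bᵀ := by noncomm_ring
    _ = (A * Cᵀ + B * Dᵀ) * (A * Aᵀ + B * Bᵀ) + (A * Bᵀ - B * Aᵀ) := by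
      rw [gram_mul_lower_left hX, gram_mul_lower_right hX]; noncomm_ring
    _ = (A * Cᵀ + B * Dᵀ) * (A * Aᵀ + B * Bᵀ) := by
      rw [mul_transpose_comm_of_fromBlocks_mem hX, sub_self, add_zero]

theorem mul_gram_inv_eq_gram_inv_mul (hX : fromBlocks A B C D ∈ symplecticGroup n R)
    (hM : IsUnit (A * Aᵀ + B * Bᵀ).det) :
    (C * Aᵀ + D * Bᵀ) * (A * Aᵀ + B * Bᵀ)⁻¹ = (A * Aᵀ + B * Bᵀ)⁻¹ * (A * Cᵀ + B * Dᵀ) := by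
  calc (C * Aᵀ + D * Bᵀ) * (A * Aᵀ + B * Bᵀ)⁻¹
      = (A * Aᵀ + B * Bᵀ)⁻¹ * ((A * Aᵀ + B * Bᵀ) * (C * Aᵀ + D * Bᵀ)) * (A * Aᵀ + B * Bᵀ)⁻¹ := by
        rw [← mul_assoc, nonsing_inv_mul _ hM, one_mul]
    _ = (A * Aᵀ + B * Bᵀ)⁻¹ * ((A * Cᵀ + B * Dᵀ) * (A * Aᵀ + B * Bᵀ)) * (A * Aᵀ + B * Bᵀ)⁻¹ := by
        rw [gram_mul_comm hX]
    _ = (A * Aᵀ + B * Bᵀ)⁻¹ * (A * Cᵀ + B * Dᵀ) := by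
        rw [mul_assoc, mul_assoc, mul_nonsing_inv _ hM, mul_one]

theorem isSymm_mul_gram_inv (hX : fromBlocks A B C D ∈ symplecticGroup n R)
    (hM : IsUnit (A * Aᵀ + B * Bᵀ).det) :
    ((C * Aᵀ + D * Bᵀ) * (A * Aᵀ + B * Bᵀ)⁻¹).IsSymm := by
  have hMt : (A * Aᵀ + B * Bᵀ)ᵀ = A * Aᵀ + B * Bᵀ :=
    ((isSymm_mul_transpose_self A).add (isSymm_mul_transpose_self B)).eq
  rw [IsSymm, transpose_mul, transpose_nonsing_inv, hMt, mul_gram_inv_eq_gram_inv_mul hX hM]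
  simp

theorem lower_left_eq (hX : fromBlocks A B C D ∈ symplecticGroup n R)
    (hM : IsUnit (A * Aᵀ + B * Bᵀ).det) :
    C = (C * Aᵀ + D * Bᵀ) * (A * Aᵀ + B * Bᵀ)⁻¹ * A - (A * Aᵀ + B * Bᵀ)⁻¹ * B := by
  rw [mul_gram_inv_eq_gram_inv_mul hX hM, mul_assoc, ← mul_sub, ← gram_mul_lower_left hX,
    ← mul_assoc, nonsing_inv_mul _ hM, one_mul]

theorem lower_right_eq (hX : fromBlocks A B C D ∈ symplecticGroup n R)
    (hM : IsUnit (A * Aᵀ + B * Bᵀ).det) :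
    D = (C * Aᵀ + D * Bᵀ) * (A * Aᵀ + B * Bᵀ)⁻¹ * B + (A * Aᵀ + B * Bᵀ)⁻¹ * A := by
  rw [mul_gram_inv_eq_gram_inv_mul hX hM, mul_assoc, ← mul_add, ← gram_mul_lower_right hX,
    ← mul_assoc, nonsing_inv_mul _ hM, one_mul]

variable {L : Matrix n n R}

theorem fromBlocks_eq_mul_fromBlocks (P : Matrix n n R) (hL : IsUnit L.det) :
    fromBlocks A B (P * A - (L * L)⁻¹ * B) (P * B + (L * L)⁻¹ * A) =
      fromBlocks L 0 (P * L) L⁻¹ * fromBlocks (L⁻¹ * A) (L⁻¹ * B) (-(L⁻¹ * B)) (L⁻¹ * A) := by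
  simp [fromBlocks_multiply, Matrix.mul_inv_rev, ← mul_assoc, mul_nonsing_inv _ hL,
    mul_nonsing_inv_cancel_right _ _ hL, sub_eq_add_neg]

theorem transpose_mul_fromBlocks_inv_mul_eq_one (hLt : Lᵀ = L) (hL : IsUnit L.det)
    (hLsq : L * L = A * Aᵀ + B * Bᵀ) (hAB : A * Bᵀ = B * Aᵀ) :
    (fromBlocks (L⁻¹ * A) (L⁻¹ * B) (-(L⁻¹ * B)) (L⁻¹ * A))ᵀ *
      fromBlocks (L⁻¹ * A) (L⁻¹ * B) (-(L⁻¹ * B)) (L⁻¹ * A) = 1 := by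
  refine mul_eq_one_comm.1 (fromBlocks_mul_transpose_eq_one ?_ ?_)
  · calc L⁻¹ * A * (L⁻¹ * A)ᵀ + L⁻¹ * B * (L⁻¹ * B)ᵀ = L⁻¹ * (L * L) * L⁻¹ := by
          rw [hLsq, transpose_mul, transpose_mul, transpose_nonsing_inv, hLt]; noncomm_ring
      _ = 1 := by rw [← mul_assoc, nonsing_inv_mul _ hL, one_mul, mul_nonsing_inv _ hL]
  · rw [transpose_mul, transpose_mul, mul_assoc, ← mul_assoc A, hAB, mul_assoc, mul_assoc]

end SymplecticGroup

open SymplecticGroup in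
/-- Iwasawa-type decomposition: every X = [[A,B],[C,D]] ∈ Sp(2d,ℝ)
factors as X = [[L,0],[PL,L⁻¹]] · R where L = (AAᵀ + BBᵀ)^{1/2} (the positive-definite
square root), P = (CAᵀ + DBᵀ)(AAᵀ + BBᵀ)⁻¹ is symmetric, and R ∈ Sp(2d,ℝ) ∩ O(2d). -/
theorem stmt9 (d : ℕ) (A B C D : Matrix (Fin d) (Fin d) ℝ)
    (J : Matrix (Fin d ⊕ Fin d) (Fin d ⊕ Fin d) ℝ) (hJ : J = Matrix.fromBlocks 0 1 (-1) 0)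
    (hS : (Matrix.fromBlocks A B C D)ᵀ * J * (Matrix.fromBlocks A B C D) = J)
    (L : Matrix (Fin d) (Fin d) ℝ) (hL : L.PosDef) (hLsq : L * L = A * Aᵀ + B * Bᵀ)
    (P : Matrix (Fin d) (Fin d) ℝ)
    (hP : P = (C * Aᵀ + D * Bᵀ) * (A * Aᵀ + B * Bᵀ)⁻¹) :
    Pᵀ = P ∧
    ∃ R : Matrix (Fin d ⊕ Fin d) (Fin d ⊕ Fin d) ℝ,
      (Rᵀ * J * R = J ∧ Rᵀ * R = 1) ∧
      Matrix.fromBlocks A B C D = Matrix.fromBlocks L 0 (P * L) L⁻¹ * R := by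
  subst hJ
  have hX : fromBlocks A B C D ∈ symplecticGroup (Fin d) ℝ := mem_iff_neg_J.2 hS
  have hLt : Lᵀ = L := by simpa using hL.isHermitian.eq
  have hLu : IsUnit L.det := (isUnit_iff_isUnit_det L).1 hL.isUnit
  have hMu : IsUnit (A * Aᵀ + B * Bᵀ).det := by rw [← hLsq, det_mul]; exact hLu.mul hLu
  have hR := transpose_mul_fromBlocks_inv_mul_eq_one hLt hLu hLsq
    (mul_transpose_comm_of_fromBlocks_mem hX)
  have hC := lower_left_eq hX hMu
  have hD := lower_right_eq hX hMu
  rw [← hP, ← hLsq] at hC hD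
  refine ⟨hP ▸ (isSymm_mul_gram_inv hX hMu).eq, _,
    ⟨mem_iff_neg_J.1 (mem_of_transpose_mul_self_eq_one_of_commute hR (commute_J_fromBlocks _ _)),
      hR⟩, ?_⟩
  rw [hC, hD]
  exact fromBlocks_eq_mul_fromBlocks P hLu
end

section
/- Let Q, P ∈ M_d(ℂ) satisfy QᵀP - PᵀQ = 0 and Q*P - P*Q = 2iI_d. Then the real 2d×2d block matrix [[Re Q, Im Q], [Re P, Im P]] is symplectic; conversely, if [[Q₁, Q₂], [P₁, P₂]] ∈ Sp(2d,ℝ), then Q := Q₁ + iQ₂ and P := P₁ + iP₂ satisfy QᵀP - PᵀQ = 0 and Q*P - P*Q = 2iI_d. -/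
open Matrix

private lemma mapE_eq {d : ℕ} (X Y X' Y' : Matrix (Fin d) (Fin d) ℝ) :
    X.map Complex.ofReal + Complex.I • Y.map Complex.ofReal =
      X'.map Complex.ofReal + Complex.I • Y'.map Complex.ofReal ↔ X = X' ∧ Y = Y' := by
  constructor
  · intro h
    constructor <;> ext i j <;>
      · have := congrFun (congrFun h i) j
        simp only [Matrix.add_apply, Matrix.smul_apply, Matrix.map_apply, smul_eq_mul] at this
        first
        | simpa using congrArg Complex.re this
        | simpa using congrArg Complex.im this
  · rintro ⟨rfl, rfl⟩; rfl

/-- For real d×d matrices Q₁, Q₂, P₁, P₂, the block matrix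
[[Q₁,Q₂],[P₁,P₂]] is symplectic iff Q := Q₁ + iQ₂ and P := P₁ + iP₂ satisfy
QᵀP - PᵀQ = 0 and Q*P - P*Q = 2iI_d. (This contains both the forward and converse
directions of the statement.) -/
theorem stmt11 (d : ℕ) (Q₁ Q₂ P₁ P₂ : Matrix (Fin d) (Fin d) ℝ)
    (Q P : Matrix (Fin d) (Fin d) ℂ)
    (hQ : Q = Q₁.map Complex.ofReal + Complex.I • Q₂.map Complex.ofReal)
    (hP : P = P₁.map Complex.ofReal + Complex.I • P₂.map Complex.ofReal) :
    ((Matrix.fromBlocks Q₁ Q₂ P₁ P₂)ᵀ *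
        (Matrix.fromBlocks 0 1 (-1) 0 : Matrix (Fin d ⊕ Fin d) (Fin d ⊕ Fin d) ℝ) *
        (Matrix.fromBlocks Q₁ Q₂ P₁ P₂) =
      (Matrix.fromBlocks 0 1 (-1) 0 : Matrix (Fin d ⊕ Fin d) (Fin d ⊕ Fin d) ℝ)) ↔
    (Qᵀ * P - Pᵀ * Q = 0 ∧
      Qᴴ * P - Pᴴ * Q = (2 * Complex.I) • (1 : Matrix (Fin d) (Fin d) ℂ)) := by
  subst hQ hP
  have hm : ∀ X Y : Matrix (Fin d) (Fin d) ℝ, (X*Y).map Complex.ofReal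
      = X.map Complex.ofReal * Y.map Complex.ofReal :=
    fun X Y => Matrix.map_mul (f := Complex.ofRealHom)
  have ha : ∀ X Y : Matrix (Fin d) (Fin d) ℝ, (X+Y).map Complex.ofReal
      = X.map Complex.ofReal + Y.map Complex.ofReal := by intro X Y; ext i j; simp
  have hs : ∀ X Y : Matrix (Fin d) (Fin d) ℝ, (X-Y).map Complex.ofReal
      = X.map Complex.ofReal - Y.map Complex.ofReal := by intro X Y; ext i j; simp
  -- the two complex conditions in terms of real matrices
  set A := Q₁ᵀ*P₁ - P₁ᵀ*Q₁ with hA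
  set B := Q₂ᵀ*P₂ - P₂ᵀ*Q₂ with hB
  set C := Q₁ᵀ*P₂ - P₁ᵀ*Q₂ with hC
  set D := Q₂ᵀ*P₁ - P₂ᵀ*Q₁ with hD
  have e1 : (Q₁.map Complex.ofReal + Complex.I • Q₂.map Complex.ofReal)ᵀ *
      (P₁.map Complex.ofReal + Complex.I • P₂.map Complex.ofReal) -
      (P₁.map Complex.ofReal + Complex.I • P₂.map Complex.ofReal)ᵀ *
      (Q₁.map Complex.ofReal + Complex.I • Q₂.map Complex.ofReal) =
      (A - B).map Complex.ofReal + Complex.I • (C + D).map Complex.ofReal := by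
    simp only [hA, hB, hC, hD, hs, ha, hm, Matrix.transpose_add, Matrix.transpose_smul,
      Matrix.transpose_map]
    simp only [Matrix.add_mul, Matrix.mul_add, Matrix.smul_mul, Matrix.mul_smul, smul_smul,
      Complex.I_mul_I, neg_smul, one_smul, smul_add, smul_sub]
    abel
  have hct : ∀ X : Matrix (Fin d) (Fin d) ℝ, (X.map Complex.ofReal)ᴴ = Xᵀ.map Complex.ofReal := by
    intro X; ext i j; simp [Matrix.conjTranspose_apply]
  have e2 : (Q₁.map Complex.ofReal + Complex.I • Q₂.map Complex.ofReal)ᴴ *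
      (P₁.map Complex.ofReal + Complex.I • P₂.map Complex.ofReal) -
      (P₁.map Complex.ofReal + Complex.I • P₂.map Complex.ofReal)ᴴ *
      (Q₁.map Complex.ofReal + Complex.I • Q₂.map Complex.ofReal) =
      (A + B).map Complex.ofReal + Complex.I • (C - D).map Complex.ofReal := by
    simp only [hA, hB, hC, hD, hs, ha, hm, Matrix.conjTranspose_add, Matrix.conjTranspose_smul,
      hct, Complex.star_def, Complex.conj_I]
    simp only [Matrix.add_mul, Matrix.mul_add, Matrix.smul_mul, Matrix.mul_smul, smul_smul,
      Complex.I_mul_I, neg_smul, one_smul, smul_add, smul_sub, neg_mul, mul_neg, neg_neg,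
      smul_neg, Complex.I_mul_I]
    module
  rw [e1, e2]
  have h0 : (0 : Matrix (Fin d) (Fin d) ℂ) =
      (0 : Matrix (Fin d) (Fin d) ℝ).map Complex.ofReal +
        Complex.I • (0 : Matrix (Fin d) (Fin d) ℝ).map Complex.ofReal := by
    ext i j; simp
  have h2I : (2 * Complex.I) • (1 : Matrix (Fin d) (Fin d) ℂ) =
      (0 : Matrix (Fin d) (Fin d) ℝ).map Complex.ofReal +
        Complex.I • ((2:ℝ) • (1 : Matrix (Fin d) (Fin d) ℝ)).map Complex.ofReal := by
    ext i j; by_cases h : i = j <;> simp [Matrix.one_apply, h, mul_comm]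
  rw [h0, h2I, mapE_eq, mapE_eq]
  -- left side via blocks
  rw [Matrix.fromBlocks_transpose, Matrix.fromBlocks_multiply, Matrix.fromBlocks_multiply,
    Matrix.fromBlocks_inj]
  simp only [Matrix.mul_zero, Matrix.mul_one, Matrix.zero_mul, Matrix.mul_neg, zero_add,
    add_zero, Matrix.one_mul, Matrix.neg_mul, mul_one, neg_add_eq_sub, ← hA, ← hB, ← hC, ← hD]
  constructor
  · rintro ⟨h1, h2, h3, h4⟩
    have hD' : D = -(1 : Matrix (Fin d) (Fin d) ℝ) := by
      rw [← h3]
    rw [h1, h2, hD']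
    refine ⟨⟨by rw [h4]; abel, by abel⟩, by rw [h4]; abel, ?_⟩
    ext i j
    by_cases h : i = j <;>
      simp [Matrix.one_apply, h, Matrix.smul_apply, Matrix.map_apply, Matrix.add_apply] <;>
        norm_num
  · rintro ⟨⟨h1, h2⟩, h3, h4⟩
    have hAB : A = B := sub_eq_zero.mp h1
    have hB0 : B = 0 := by
      have h2B : (2:ℝ) • B = 0 := by rw [two_smul]; rw [hAB] at h3; exact h3
      exact (smul_eq_zero.mp h2B).resolve_left two_ne_zero
    have hDC : -C = D := neg_eq_of_add_eq_zero_right h2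
    have hC1 : C = 1 := by
      have h2C : (2:ℝ) • C = (2:ℝ) • (1 : Matrix (Fin d) (Fin d) ℝ) := by
        rw [two_smul]
        rw [← hDC, sub_neg_eq_add] at h4
        exact h4
      exact smul_right_injective _ two_ne_zero h2C
    exact ⟨hAB.trans hB0, hC1, by rw [← hDC, hC1], hB0⟩
end
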